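/- For any W ∈ (0,2], partitioning [-1,1] into K_W = ⌈2/W⌉ bins of length at most W and letting g_W(X) = E[u_Y | bin index of v_u(X)], the predictor g_W is perfectly calibrated (E[u_Y | g_W(X)] = g_W(X) a.s.) and satisfies E|g_W(X) - v_u(X)| ≤ (2/W + 1)·UC(f,u) + W. -/

import Mathlib

/-!
On a bin cell `S_j = {ψ ∘ v = j}` the predictor `g` is constant, equal to the mean of `u_Y`
over `S_j`, while `v` stays within `W` of its own mean there; hence
`∫_{S_j} |g - v| ≤ |∫_{S_j} (u_Y - v)| + W μ(S_j)`. As `S_j = v⁻¹(A_j)` and an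
order-connected subset of `[-1, 1]` is an increasing union of closed intervals, the first term
is at most `UC`. Summing over the `K ≤ 2/W + 1` cells gives the bound. Calibration is the
tower property, since `σ(g) ⊆ σ(ψ ∘ v)`.
-/

open MeasureTheory Set Filter Topology

theorem condExp_comap_condExp_ae_eq {Ω E : Type*} {m m0 : MeasurableSpace Ω}
    {μ : Measure[m0] Ω} [IsFiniteMeasure μ] [NormedAddCommGroup E] [NormedSpace ℝ E]
    [CompleteSpace E] [MeasurableSpace E] [BorelSpace E] [SecondCountableTopology E]
    (hm : m ≤ m0) (f : Ω → E) :
    μ[f | MeasurableSpace.comap (μ[f | m]) ‹_›] =ᵐ[μ] μ[f | m] := by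
  have hgm : MeasurableSpace.comap (μ[f | m]) ‹_› ≤ m :=
    stronglyMeasurable_condExp.measurable.comap_le
  calc μ[f | MeasurableSpace.comap (μ[f | m]) ‹_›]
      =ᵐ[μ] μ[μ[f | m] | MeasurableSpace.comap (μ[f | m]) ‹_›] :=
        (condExp_condExp_of_le hgm hm).symm
    _ = μ[f | m] := condExp_of_stronglyMeasurable (hgm.trans hm)
        (comap_measurable _).stronglyMeasurable integrable_condExp

open Classical in
theorem Set.OrdConnected.exists_monotone_iUnion_Icc_eq {A : Set ℝ} (hA : A.OrdConnected)
    (hbb : BddBelow A) (hba : BddAbove A) :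
    ∃ a b : ℕ → ℝ, Monotone (fun n => Icc (a n) (b n)) ∧ ⋃ n, Icc (a n) (b n) = A := by
  rcases A.eq_empty_or_nonempty with rfl | hne
  · exact ⟨fun _ => 1, fun _ => 0, fun _ _ _ => le_rfl, by simp⟩
  set l := sInf A
  set r := sSup A
  have hIoo : Ioo l r ⊆ A :=
    IsConnected.Ioo_csInf_csSup_subset ⟨hne, hA.isPreconnected⟩ hbb hba
  have hAlr : A ⊆ Icc l r := subset_Icc_csInf_csSup hbb hba
  -- an endpoint outside `A` is approached from inside at rate `1 / (n + 1)`
  set a : ℕ → ℝ := fun n => if l ∈ A then l else l + 1 / (n + 1)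
  set b : ℕ → ℝ := fun n => if r ∈ A then r else r - 1 / (n + 1)
  have hsmall : ∀ {x}, 0 < x → ∀ᶠ n : ℕ in atTop, 1 / ((n : ℝ) + 1) < x := fun hx =>
    tendsto_one_div_add_atTop_nhds_zero_nat.eventually (gt_mem_nhds hx)
  refine ⟨a, b, fun n k hnk => Icc_subset_Icc ?_ ?_, (iUnion_subset fun n x hx => ?_).antisymm
    fun x hx => ?_⟩
  · have : 1 / ((k : ℝ) + 1) ≤ 1 / ((n : ℝ) + 1) := by gcongr
    simp only [a]; split_ifs <;> linarith
  · have : 1 / ((k : ℝ) + 1) ≤ 1 / ((n : ℝ) + 1) := by gcongr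
    simp only [b]; split_ifs <;> linarith
  · have hpos : (0 : ℝ) < 1 / ((n : ℝ) + 1) := by positivity
    obtain ⟨hax, hxb⟩ := hx
    by_contra hxA
    have hlx : l < x := by
      refine lt_of_le_of_ne ?_ fun hlx => ?_
      · simp only [a] at hax; split_ifs at hax <;> linarith
      · simp only [a, hlx, if_neg hxA] at hax; linarith
    have hxr : x < r := by
      refine lt_of_le_of_ne ?_ fun hxr => ?_
      · simp only [b] at hxb; split_ifs at hxb <;> linarith
      · simp only [b, ← hxr, if_neg hxA] at hxb; linarith
    exact hxA (hIoo ⟨hlx, hxr⟩)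
  · obtain ⟨hlx, hxr⟩ := hAlr hx
    have ha : ∀ᶠ n in atTop, a n ≤ x := by
      by_cases hl : l ∈ A
      · exact Eventually.of_forall fun n => by simpa only [a, if_pos hl]
      · filter_upwards [hsmall (sub_pos.2 (lt_of_le_of_ne hlx fun h => hl (h ▸ hx)))] with n hn
        simp only [a, if_neg hl]; linarith
    have hb : ∀ᶠ n in atTop, x ≤ b n := by
      by_cases hr : r ∈ A
      · exact Eventually.of_forall fun n => by simpa only [b, if_pos hr]
      · filter_upwards [hsmall (sub_pos.2 (lt_of_le_of_ne hxr fun h => hr (h ▸ hx)))] with n hn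
        simp only [b, if_neg hr]; linarith
    obtain ⟨n, hn⟩ := (ha.and hb).exists
    exact mem_iUnion.2 ⟨n, hn⟩

section IntervalBias

variable {Ω : Type*} [MeasurableSpace Ω] {μ : Measure Ω} {f v : Ω → ℝ}

/-- For `f = u_Y - v_u(X)` this is `UC(f, u)`. -/
noncomputable def intervalBias (μ : Measure Ω) (f v : Ω → ℝ) : ℝ :=
  ⨆ I : {q : ℝ × ℝ // -1 ≤ q.1 ∧ q.1 ≤ q.2 ∧ q.2 ≤ 1},
    |∫ ω, f ω * (Icc I.1.1 I.1.2).indicator (fun _ => (1 : ℝ)) (v ω) ∂μ|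

theorem integral_mul_indicator_comp (hv : Measurable v) {s : Set ℝ} (hs : MeasurableSet s) :
    ∫ ω, f ω * s.indicator (fun _ => (1 : ℝ)) (v ω) ∂μ = ∫ ω in v ⁻¹' s, f ω ∂μ := by
  rw [← integral_indicator (hv hs)]
  congr 1 with ω
  by_cases h : v ω ∈ s <;> simp [h]

theorem bddAbove_intervalBias (hf : Integrable f μ) :
    BddAbove (range fun I : {q : ℝ × ℝ // -1 ≤ q.1 ∧ q.1 ≤ q.2 ∧ q.2 ≤ 1} =>
      |∫ ω, f ω * (Icc I.1.1 I.1.2).indicator (fun _ => (1 : ℝ)) (v ω) ∂μ|) := by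
  refine ⟨∫ ω, |f ω| ∂μ, forall_mem_range.2 fun I => ?_⟩
  refine abs_integral_le_integral_abs.trans
    (integral_mono_of_nonneg (ae_of_all _ fun ω => abs_nonneg _) hf.abs
      (ae_of_all _ fun ω => ?_))
  by_cases h : v ω ∈ Icc I.1.1 I.1.2 <;> simp [h]

theorem intervalBias_nonneg (hf : Integrable f μ) : 0 ≤ intervalBias μ f v :=
  (abs_nonneg _).trans
    (le_ciSup (bddAbove_intervalBias hf) ⟨(-1, -1), le_rfl, le_rfl, by norm_num⟩)

theorem abs_setIntegral_preimage_le_intervalBias (hf : Integrable f μ) (hv : Measurable v)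
    {A : Set ℝ} (hA : A.OrdConnected) (hA1 : A ⊆ Icc (-1) 1) :
    |∫ ω in v ⁻¹' A, f ω ∂μ| ≤ intervalBias μ f v := by
  obtain ⟨a, b, hmono, hab⟩ :=
    hA.exists_monotone_iUnion_Icc_eq (bddBelow_Icc.mono hA1) (bddAbove_Icc.mono hA1)
  have hlim := tendsto_setIntegral_of_monotone (fun n => hv measurableSet_Icc)
    (fun n k h => preimage_mono (hmono h)) hf.integrableOn (μ := μ)
  rw [← preimage_iUnion, hab] at hlim
  refine le_of_tendsto' hlim.abs fun n => ?_
  have hsub : Icc (a n) (b n) ⊆ Icc (-1) 1 := (hab ▸ subset_iUnion _ n).trans hA1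
  rcases le_or_gt (a n) (b n) with hle | hlt
  · rw [← integral_mul_indicator_comp hv measurableSet_Icc]
    exact le_ciSup (bddAbove_intervalBias hf)
      ⟨(a n, b n), (hsub ⟨le_rfl, hle⟩).1, hle, (hsub ⟨hle, le_rfl⟩).2⟩
  · simpa [Icc_eq_empty_of_lt hlt] using intervalBias_nonneg hf

end IntervalBias

theorem setIntegral_abs_sub_le_of_const {Ω : Type*} [MeasurableSpace Ω] {μ : Measure Ω}
    [IsFiniteMeasure μ] {S : Set Ω} (hS : MeasurableSet S) {u v g : Ω → ℝ}
    (hu : IntegrableOn u S μ) (hv : IntegrableOn v S μ) {W : ℝ}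
    (hvW : ∀ x ∈ S, ∀ y ∈ S, |v x - v y| ≤ W) (hg : ∀ x ∈ S, ∀ y ∈ S, g x = g y)
    (hgu : ∫ x in S, g x ∂μ = ∫ x in S, u x ∂μ) :
    ∫ x in S, |g x - v x| ∂μ ≤ |∫ x in S, (u x - v x) ∂μ| + W * μ.real S := by
  by_cases h0 : μ S = 0
  · simp [Measure.restrict_eq_zero.2 h0, measureReal_def, h0]
  obtain ⟨x₀, hx₀⟩ := nonempty_of_measure_ne_zero h0
  set c := g x₀
  set m := ⨍ x in S, v x ∂μ
  have hm : ∀ x ∈ S, |m - v x| ≤ W := by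
    intro x hx
    have : m ∈ Icc (v x - W) (v x + W) :=
      (convex_Icc _ _).set_average_mem isClosed_Icc h0 (measure_ne_top _ _)
        ((ae_restrict_iff' hS).2 (Eventually.of_forall fun y hy => ?_)) hv
    · rw [abs_sub_le_iff]; constructor <;> linarith [this.1, this.2]
    · have := abs_sub_le_iff.1 (hvW y hy x hx); constructor <;> linarith
  have hcm : |c - m| * μ.real S = |∫ x in S, (u x - v x) ∂μ| := by
    rw [integral_sub hu hv, ← hgu, setIntegral_congr_fun hS fun x hx => hg x hx x₀ hx₀,
      setIntegral_const, ← measure_smul_setAverage _ (measure_ne_top _ _), smul_eq_mul,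
      smul_eq_mul, ← mul_sub, abs_mul, abs_of_nonneg measureReal_nonneg, mul_comm]
  calc ∫ x in S, |g x - v x| ∂μ = ∫ x in S, |c - v x| ∂μ :=
        setIntegral_congr_fun hS fun x hx => by rw [hg x hx x₀ hx₀]
    _ ≤ ∫ x in S, (|c - m| + W) ∂μ := by
        refine setIntegral_mono_on ((integrableOn_const (measure_ne_top _ _)).sub hv).abs
          (integrableOn_const (measure_ne_top _ _)) hS fun x hx => ?_
        linarith [abs_sub_le c m (v x), hm x hx]
    _ = |∫ x in S, (u x - v x) ∂μ| + W * μ.real S := by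
        rw [setIntegral_const, smul_eq_mul, mul_add, mul_comm, hcm, mul_comm]

theorem comap_le_of_measurableSet_preimage_singleton {Ω ι : Type*} [MeasurableSpace Ω]
    [Countable ι] {bin : Ω → ι} (hbin : ∀ j, MeasurableSet (bin ⁻¹' {j})) :
    MeasurableSpace.comap bin ⊤ ≤ ‹_› :=
  @Measurable.comap_le _ _ _ ⊤ _ (@measurable_to_countable' ι Ω ⊤ _ _ bin hbin)

theorem integral_abs_condExp_comap_sub_le {Ω ι : Type*} [MeasurableSpace Ω] {μ : Measure Ω}
    [IsFiniteMeasure μ] [Fintype ι] {bin : Ω → ι} (hbin : ∀ j, MeasurableSet (bin ⁻¹' {j}))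
    {u v : Ω → ℝ} (hu : Integrable u μ) (hv : Integrable v μ) {W : ℝ}
    (hvW : ∀ x y, bin x = bin y → |v x - v y| ≤ W) :
    ∫ ω, |μ[u | MeasurableSpace.comap bin ⊤] ω - v ω| ∂μ ≤
      ∑ j, |∫ ω in bin ⁻¹' {j}, (u ω - v ω) ∂μ| + W * μ.real univ := by
  let _ : MeasurableSpace ι := ⊤
  have hm := comap_le_of_measurableSet_preimage_singleton hbin
  have hcover : ⋃ j, bin ⁻¹' {j} = univ := by
    rw [← preimage_iUnion, iUnion_of_singleton, preimage_univ]
  have hint : Integrable (fun ω => |μ[u | MeasurableSpace.comap bin ⊤] ω - v ω|) μ :=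
    (integrable_condExp.sub hv).abs
  calc ∫ ω, |μ[u | MeasurableSpace.comap bin ⊤] ω - v ω| ∂μ
      = ∑ j, ∫ ω in bin ⁻¹' {j}, |μ[u | MeasurableSpace.comap bin ⊤] ω - v ω| ∂μ := by
        rw [← integral_iUnion_fintype hbin (pairwise_disjoint_fiber bin)
          fun j => hint.integrableOn, hcover, setIntegral_univ]
    _ ≤ ∑ j, (|∫ ω in bin ⁻¹' {j}, (u ω - v ω) ∂μ| + W * μ.real (bin ⁻¹' {j})) :=
        Finset.sum_le_sum fun j _ => setIntegral_abs_sub_le_of_const (hbin j) hu.integrableOn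
          hv.integrableOn (fun x hx y hy => hvW x y (hx.trans hy.symm))
          (fun x hx y hy => stronglyMeasurable_condExp.factorsThrough (hx.trans hy.symm))
          (setIntegral_condExp hm hu ⟨{j}, trivial, rfl⟩)
    _ = ∑ j, |∫ ω in bin ⁻¹' {j}, (u ω - v ω) ∂μ| + W * μ.real univ := by
        rw [Finset.sum_add_distrib, ← Finset.mul_sum,
          ← measureReal_iUnion_fintype (pairwise_disjoint_fiber bin) hbin, hcover]

/-- binning the predicted utility `v` into `K = ⌈2/W⌉` interval-bins of length
at most `W` and taking the conditional expectation of the realized utility `uY` given the bin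
index yields a perfectly calibrated predictor `g` with `E|g - v| ≤ (2/W + 1)·UC + W`. -/
theorem stmt_2 {Ω : Type*} [MeasurableSpace Ω] (μ : Measure Ω) [IsProbabilityMeasure μ]
    (uY v : Ω → ℝ)
    (huY : ∀ ω, uY ω ∈ Icc (-1 : ℝ) 1) (hv : ∀ ω, v ω ∈ Icc (-1 : ℝ) 1)
    (hmuY : Measurable uY) (hmv : Measurable v)
    (UC : ℝ)
    (hUC : UC = ⨆ I : {q : ℝ × ℝ // -1 ≤ q.1 ∧ q.1 ≤ q.2 ∧ q.2 ≤ 1},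
      |∫ ω, (uY ω - v ω) * (Icc I.1.1 I.1.2).indicator (fun _ => (1 : ℝ)) (v ω) ∂μ|)
    (W : ℝ)
    (K : ℕ) (hK : (K : ℝ) = ⌈2 / W⌉)
    (A : Fin K → Set ℝ)
    (hAsub : ∀ j, A j ⊆ Icc (-1 : ℝ) 1)
    (hAint : ∀ j, (A j).OrdConnected)
    (hAlen : ∀ j, ∀ x ∈ A j, ∀ y ∈ A j, |x - y| ≤ W)
    (hAdisj : Pairwise (Function.onFun Disjoint A))
    (ψ : ℝ → Fin K) (hψ : ∀ z ∈ Icc (-1 : ℝ) 1, z ∈ A (ψ z))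
    (g : Ω → ℝ)
    (hg : g = μ[uY | MeasurableSpace.comap (fun ω => ψ (v ω)) (⊤ : MeasurableSpace (Fin K))]) :
    (μ[uY | MeasurableSpace.comap g (by infer_instance)] =ᵐ[μ] g) ∧
    ∫ ω, |g ω - v ω| ∂μ ≤ (2 / W + 1) * UC + W := by
  set bin : Ω → Fin K := fun ω => ψ (v ω)
  have hbin : ∀ j, bin ⁻¹' {j} = v ⁻¹' A j := fun j => Set.ext fun ω =>
    ⟨fun h => h ▸ hψ _ (hv ω), fun h => by_contra fun hne =>
      Set.disjoint_left.1 (hAdisj hne) (hψ _ (hv ω)) h⟩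
  have hmeas : ∀ j, MeasurableSet (bin ⁻¹' {j}) := fun j => hbin j ▸ hmv (hAint j).measurableSet
  have hintuY : Integrable uY μ :=
    .of_bound hmuY.aestronglyMeasurable 1 (ae_of_all _ fun ω => abs_le.2 (huY ω))
  have hintv : Integrable v μ :=
    .of_bound hmv.aestronglyMeasurable 1 (ae_of_all _ fun ω => abs_le.2 (hv ω))
  replace hUC : UC = intervalBias μ (uY - v) v := hUC
  have hKle : (K : ℝ) ≤ 2 / W + 1 := hK ▸ (Int.ceil_lt_add_one _).le
  have hm := comap_le_of_measurableSet_preimage_singleton hmeas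
  refine ⟨hg ▸ condExp_comap_condExp_ae_eq hm uY, ?_⟩
  calc ∫ ω, |g ω - v ω| ∂μ ≤ ∑ j, |∫ ω in bin ⁻¹' {j}, (uY ω - v ω) ∂μ| + W * μ.real univ :=
        hg ▸ integral_abs_condExp_comap_sub_le hmeas hintuY hintv fun x y hxy =>
          hAlen (bin x) _ (hψ _ (hv x)) _ (hxy ▸ hψ _ (hv y))
    _ ≤ ∑ _j : Fin K, UC + W := by
        rw [probReal_univ, mul_one]
        gcongr with j
        rw [hbin, hUC]
        exact abs_setIntegral_preimage_le_intervalBias (hintuY.sub hintv) hmv (hAint j) (hAsub j)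
    _ ≤ (2 / W + 1) * UC + W := by
        rw [Finset.sum_const, Finset.card_univ, Fintype.card_fin, nsmul_eq_mul]
        gcongr
        exact hUC ▸ intervalBias_nonneg (hintuY.sub hintv)
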